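/- Let R be a commutative ring, b1,…,b5 ∈ R, and let u ∈ R[[t]] be the unique formal power series with u = t^2·(1 + b1·u + b2·u^2 + b3·u^3 + b4·u^4 + b5·u^5). Then for every n ≥ 1, n times the coefficient of t^{2n} in u equals ∑ (n!/((k2+2k3+3k4+4k5+1)!·k1!·k2!·k3!·k4!·k5!))·b1^{k1}·b2^{k2}·b3^{k3}·b4^{k4}·b5^{k5}, the sum over all (k1,…,k5) ∈ ℕ^5 with k1+2k2+3k3+4k4+5k5 = n−1 (each summand being a multinomial coefficient, a natural number, times a monomial in the b_i). -/

import Mathlib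

open PowerSeries Finset

/-- The power series `u` satisfies the curve equation at infinity:
`u = t² · (1 + b₁u + b₂u² + b₃u³ + b₄u⁴ + b₅u⁵)`. -/
def SatisfiesCurveEqAtInfinity {R : Type*} [CommRing R] (b1 b2 b3 b4 b5 : R)
    (u : PowerSeries R) : Prop :=
  u = X ^ 2 * (1 + C b1 * u + C b2 * u ^ 2 + C b3 * u ^ 3
      + C b4 * u ^ 4 + C b5 * u ^ 5)

/-- For a tuple `(k₁,…,k₅)`, the multinomial coefficient
`n!/((k₂+2k₃+3k₄+4k₅+1)!·k₁!·k₂!·k₃!·k₄!·k₅!)` where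
`n = k₁+2k₂+3k₃+4k₄+5k₅+1 = (k₂+2k₃+3k₄+4k₅+1) + k₁+k₂+k₃+k₄+k₅`;
here `k i` denotes `k_{i+1}`. -/
def lagrangeMultinomial (k : Fin 5 → ℕ) : ℕ :=
  Nat.multinomial Finset.univ
    (Fin.cons (k 1 + 2 * k 2 + 3 * k 3 + 4 * k 4 + 1) k : Fin 6 → ℕ)

/-!
This is Lagrange inversion for `u = X^d φ(u)` with `φ(0) = 1`, here `d = 2` and
`φ = 1 + b₁x + ⋯ + b₅x⁵`. Put `q = φ(u)`, a unit. Then `u' = q⁻ⁿ φⁿ(u) u'`, and expanding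
`φⁿ(u) = ∑ cₘ X^{dm} qᵐ` reduces `dn [X^{dn}] u = [X^{dn-1}] u'` to the numbers
`[X^{dj-1}] q⁻ʲ u'` with `j = n - m`. For `j = 1` this number is `d`. For `j ≥ 2` it vanishes once
multiplied by `j - 1`, because `(j - 1) q⁻ʲ u' = d (j - 1) X^{d-1} q^{1-j} - X^d (q^{1-j})'` and the
two terms have opposite coefficients of `X^{dj-1}`. So `n [X^{dn}] u = [x^{n-1}] φⁿ` wherever `ℕ`
acts without torsion. Over an arbitrary ring the identity is pulled back from the generic
`φ = 1 + ∑ aᵢ x^{i+1}` over the torsion-free ring `ℤ[a₀, a₁, …]`: since `w ↦ X^d φ(w)` is an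
`X`-adic contraction, the solution exists there and is unique everywhere.
-/

open scoped Polynomial

namespace PowerSeries

variable {R : Type*} [CommRing R]

def IsXAdicContraction (F : R⟦X⟧ → R⟦X⟧) : Prop :=
  ∀ m f g, X ^ m ∣ f - g → X ^ (m + 1) ∣ F f - F g

theorem eq_of_forall_X_pow_dvd_sub {f g : R⟦X⟧} (h : ∀ m, X ^ m ∣ f - g) : f = g := by
  ext m
  rw [← sub_eq_zero, ← map_sub]
  exact X_pow_dvd_iff.mp (h (m + 1)) m m.lt_succ_self

namespace IsXAdicContraction

variable {F : R⟦X⟧ → R⟦X⟧}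

theorem eq_of_isFixedPt (hF : IsXAdicContraction F) {f g : R⟦X⟧} (hf : Function.IsFixedPt F f)
    (hg : Function.IsFixedPt F g) : f = g := by
  refine eq_of_forall_X_pow_dvd_sub fun m => ?_
  induction m with
  | zero => simp
  | succ m ih => simpa only [hf.eq, hg.eq] using hF m f g ih

theorem X_pow_dvd_iterate_sub (hF : IsXAdicContraction F) (m k : ℕ) :
    X ^ m ∣ F^[m + k] 0 - F^[m] 0 := by
  induction m with
  | zero => simp
  | succ m ih =>
    rw [Nat.add_right_comm, Function.iterate_succ_apply', Function.iterate_succ_apply']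
    exact hF m _ _ ih

theorem exists_isFixedPt (hF : IsXAdicContraction F) : ∃ f, Function.IsFixedPt F f := by
  -- the `X`-adic limit of the iterates `F^[m] 0`, which stabilise below degree `m`
  set f : R⟦X⟧ := mk fun m => coeff m (F^[m + 1] 0)
  have hf : ∀ m, X ^ m ∣ f - F^[m] 0 := fun m => X_pow_dvd_iff.mpr fun j hj => by
    obtain ⟨k, rfl⟩ := Nat.exists_eq_add_of_lt hj
    have := X_pow_dvd_iff.mp (hF.X_pow_dvd_iterate_sub (j + 1) k) j j.lt_succ_self
    rw [map_sub, sub_eq_zero] at this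
    rw [map_sub, coeff_mk, ← this, Nat.add_right_comm, sub_self]
  refine ⟨f, eq_of_forall_X_pow_dvd_sub fun m => X_pow_dvd_iff.mpr fun j hj => ?_⟩
  have := X_pow_dvd_iff.mp (hF j _ _ (hf j)) j j.lt_succ_self
  rw [map_sub, sub_eq_zero, ← Function.iterate_succ_apply' F] at this
  rw [map_sub, this, coeff_mk, sub_self]

end IsXAdicContraction

theorem isXAdicContraction_X_pow_mul_aeval {d : ℕ} (hd : 0 < d) (φ : R[X]) :
    IsXAdicContraction fun f : R⟦X⟧ => X ^ d * Polynomial.aeval f φ := by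
  intro m f g h
  rw [← mul_sub]
  refine (pow_dvd_pow X (by omega : m + 1 ≤ d + m)).trans ?_
  rw [pow_add]
  refine mul_dvd_mul_left _ (h.trans ?_)
  simpa only [Polynomial.aeval_def, Polynomial.eval₂_eq_eval_map]
    using Polynomial.sub_dvd_eval_sub f g _

theorem isUnit_aeval_of_eq_X_pow_mul_aeval {d : ℕ} (hd : 0 < d) {φ : R[X]}
    (hφ : IsUnit (φ.coeff 0)) {u : R⟦X⟧} (hu : u = X ^ d * Polynomial.aeval u φ) :
    IsUnit (Polynomial.aeval u φ) := by
  have hu0 : constantCoeff u = 0 := by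
    rw [hu, map_mul, map_pow, constantCoeff_X, zero_pow hd.ne', zero_mul]
  rw [isUnit_iff_constantCoeff,
    Polynomial.map_aeval_eq_aeval_map (φ := RingHom.id R) (by ext; simp), Polynomial.map_id, hu0,
    ← Polynomial.coeff_zero_eq_aeval_zero]
  exact hφ

theorem derivative_X_pow_mul (d : ℕ) (q : R⟦X⟧) :
    d⁄dX R (X ^ d * q) = (d : R⟦X⟧) * X ^ (d - 1) * q + X ^ d * d⁄dX R q := by
  rw [Derivation.leibniz, derivative_pow, derivative_X, smul_eq_mul, smul_eq_mul]
  ring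

section Unit

variable {d : ℕ} (q : R⟦X⟧ˣ)

theorem coeff_inv_mul_derivative_X_pow_mul (hd : 0 < d) :
    coeff (d - 1) ((↑q⁻¹ : R⟦X⟧) * d⁄dX R (X ^ d * (q : R⟦X⟧))) = d := by
  have : (↑q⁻¹ : R⟦X⟧) * d⁄dX R (X ^ d * (q : R⟦X⟧))
      = C (d : R) * X ^ (d - 1) + X ^ d * ((↑q⁻¹ : R⟦X⟧) * d⁄dX R q) := by
    rw [derivative_X_pow_mul, map_natCast]
    linear_combination ((d : R⟦X⟧) * X ^ (d - 1)) * q.inv_mul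
  rw [this, map_add, coeff_C_mul_X_pow, if_pos rfl, coeff_X_pow_mul', if_neg (by omega),
    add_zero]

theorem natCast_mul_coeff_inv_pow_mul_derivative_X_pow_mul (hd : 0 < d) (k : ℕ) :
    ((k + 1 : ℕ) : R) *
      coeff (d * (k + 2) - 1) ((↑q⁻¹ : R⟦X⟧) ^ (k + 2) * d⁄dX R (X ^ d * (q : R⟦X⟧))) = 0 := by
  obtain ⟨e, rfl⟩ : ∃ e, d = e + 1 := ⟨d - 1, by omega⟩
  have hW : d⁄dX R ((↑q⁻¹ : R⟦X⟧) ^ (k + 1))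
      = -((k + 1 : ℕ) * ((↑q⁻¹ : R⟦X⟧) ^ (k + 2) * d⁄dX R q)) := by
    rw [derivative_pow, derivative_inv, Nat.add_sub_cancel]
    ring
  have : C ((k + 1 : ℕ) : R) * ((↑q⁻¹ : R⟦X⟧) ^ (k + 2) * d⁄dX R (X ^ (e + 1) * (q : R⟦X⟧)))
      = C (((k + 1 : ℕ) * (e + 1 : ℕ) : R)) * (X ^ e * (↑q⁻¹ : R⟦X⟧) ^ (k + 1))
        - X ^ (e + 1) * d⁄dX R ((↑q⁻¹ : R⟦X⟧) ^ (k + 1)) := by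
    rw [hW, derivative_X_pow_mul, map_mul, map_natCast, map_natCast, Nat.add_sub_cancel]
    linear_combination ((k + 1 : ℕ) * (e + 1 : ℕ) * X ^ e * (↑q⁻¹ : R⟦X⟧) ^ (k + 1)) * q.inv_mul
  rw [← coeff_C_mul, this, map_sub, coeff_C_mul,
    show (e + 1) * (k + 2) - 1 = (e + 1) * (k + 1) + e by ring_nf; omega, coeff_X_pow_mul,
    show (e + 1) * (k + 1) + e = e + (e + 1) * k + (e + 1) by ring, coeff_X_pow_mul,
    coeff_derivative, show e + (e + 1) * k + 1 = (e + 1) * (k + 1) by ring]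
  push_cast
  ring

variable [IsAddTorsionFree R]

theorem natCast_mul_left_cancel {n : ℕ} (hn : n ≠ 0) {a b : R} (h : (n : R) * a = n * b) :
    a = b :=
  nsmul_right_injective hn (by simpa only [nsmul_eq_mul] using h)

theorem coeff_inv_pow_mul_derivative_X_pow_mul (hd : 0 < d) (j : ℕ) :
    coeff (d * (j + 1) - 1) ((↑q⁻¹ : R⟦X⟧) ^ (j + 1) * d⁄dX R (X ^ d * (q : R⟦X⟧)))
      = if j = 0 then (d : R) else 0 := by
  rcases j with _ | k
  · simpa using coeff_inv_mul_derivative_X_pow_mul q hd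
  · exact natCast_mul_left_cancel k.succ_ne_zero
      ((natCast_mul_coeff_inv_pow_mul_derivative_X_pow_mul q hd k).trans (mul_zero _).symm)

theorem coeff_pow_mul_inv_pow_mul_derivative {u : R⟦X⟧} (hd : 0 < d)
    (hu : u = X ^ d * (q : R⟦X⟧)) (m : ℕ) {n : ℕ} (hn : 0 < n) :
    coeff (d * n - 1) (u ^ m * (↑q⁻¹ : R⟦X⟧) ^ n * d⁄dX R u)
      = if m + 1 = n then (d : R) else 0 := by
  rcases lt_or_ge m n with hmn | hmn
  · obtain ⟨j, rfl⟩ := Nat.exists_eq_add_of_lt hmn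
    have hqm : (q : R⟦X⟧) ^ m * (↑q⁻¹ : R⟦X⟧) ^ m = 1 := by rw [← mul_pow, q.mul_inv, one_pow]
    have : u ^ m * (↑q⁻¹ : R⟦X⟧) ^ (m + j + 1) * d⁄dX R u
        = X ^ (d * m) * ((↑q⁻¹ : R⟦X⟧) ^ (j + 1) * d⁄dX R (X ^ d * (q : R⟦X⟧))) := by
      rw [← hu, hu, mul_pow, ← pow_mul, add_assoc, pow_add, ← hu]
      linear_combination (X ^ (d * m) * (↑q⁻¹ : R⟦X⟧) ^ (j + 1) * d⁄dX R u) * hqm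
    have hdj : 0 < d * (j + 1) := Nat.mul_pos hd j.succ_pos
    rw [this,
      show d * (m + j + 1) - 1 = (d * (j + 1) - 1) + d * m by rw [add_assoc, mul_add]; omega,
      coeff_X_pow_mul, coeff_inv_pow_mul_derivative_X_pow_mul q hd j]
    exact if_congr (by omega) rfl rfl
  · rw [if_neg (by omega), hu, mul_pow, ← pow_mul, mul_assoc, mul_assoc, coeff_X_pow_mul', if_neg]
    have := Nat.mul_le_mul_left d hmn
    have := Nat.mul_pos hd hn
    omega

end Unit

theorem lagrange_inversion_of_isAddTorsionFree [IsAddTorsionFree R] {d : ℕ} (hd : 0 < d)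
    {φ : R[X]} (hφ : IsUnit (φ.coeff 0)) {u : R⟦X⟧} (hu : u = X ^ d * Polynomial.aeval u φ)
    {n : ℕ} (hn : 0 < n) : (n : R) * coeff (d * n) u = (φ ^ n).coeff (n - 1) := by
  obtain ⟨q, hq⟩ := isUnit_aeval_of_eq_X_pow_mul_aeval hd hφ hu
  set N := (φ ^ n).natDegree + n
  have hderiv : d⁄dX R u
      = ∑ i ∈ range N, (φ ^ n).coeff i • (u ^ i * (↑q⁻¹ : R⟦X⟧) ^ n * d⁄dX R u) := by
    have hqn : (q : R⟦X⟧) ^ n * (↑q⁻¹ : R⟦X⟧) ^ n = 1 := by rw [← mul_pow, q.mul_inv, one_pow]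
    calc d⁄dX R u = Polynomial.aeval u (φ ^ n) * (↑q⁻¹ : R⟦X⟧) ^ n * d⁄dX R u := by
          rw [map_pow, ← hq, hqn, one_mul]
      _ = _ := by
          rw [Polynomial.aeval_eq_sum_range' (n := N) (by omega), sum_mul, sum_mul]
          simp only [smul_mul_assoc]
  rw [← hq] at hu
  have hcoeff : coeff (d * n - 1) (d⁄dX R u) = (φ ^ n).coeff (n - 1) * d := by
    rw [hderiv, map_sum]
    simp only [coeff_smul, coeff_pow_mul_inv_pow_mul_derivative q hd hu _ hn, smul_eq_mul,
      mul_ite, mul_zero]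
    rw [sum_eq_single_of_mem (n - 1) (mem_range.mpr (by omega)) fun i _ hi => if_neg (by omega),
      if_pos (by omega)]
  have hdn : d * n - 1 + 1 = d * n := Nat.sub_add_cancel (Nat.mul_pos hd hn)
  rw [coeff_derivative, ← Nat.cast_add_one, hdn] at hcoeff
  refine natCast_mul_left_cancel hd.ne' ?_
  rw [← mul_assoc, ← Nat.cast_mul, mul_comm, mul_comm (d : R), hcoeff]

end PowerSeries

noncomputable def universalPolynomial (N : ℕ) : (MvPolynomial ℕ ℤ)[X] :=
  1 + ∑ i ∈ range N, Polynomial.C (MvPolynomial.X i) * Polynomial.X ^ (i + 1)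

theorem map_universalPolynomial {R : Type*} [CommRing R] {φ : R[X]} (hφ : φ.coeff 0 = 1) :
    (universalPolynomial φ.natDegree).map
      (MvPolynomial.eval₂Hom (Int.castRingHom R) fun i => φ.coeff (i + 1)) = φ := by
  ext (_ | k)
  · simp [universalPolynomial, hφ]
  · simp only [universalPolynomial, Polynomial.coeff_map, Polynomial.coeff_add,
      Polynomial.coeff_one, Polynomial.finsetSum_coeff, Polynomial.coeff_C_mul_X_pow,
      Nat.add_eq_zero_iff, one_ne_zero, and_false, ↓reduceIte, Nat.add_right_cancel_iff,
      sum_ite_eq, mem_range, zero_add, MvPolynomial.coe_eval₂Hom]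
    split_ifs with hk
    · exact MvPolynomial.eval₂_X _ _ _
    · rw [MvPolynomial.eval₂_zero,
        Polynomial.coeff_eq_zero_of_natDegree_lt (not_lt.mp hk |>.trans_lt k.lt_succ_self)]

theorem PowerSeries.lagrange_inversion {R : Type*} [CommRing R] {d : ℕ} (hd : 0 < d) {φ : R[X]}
    (hφ : φ.coeff 0 = 1) {u : R⟦X⟧} (hu : u = X ^ d * Polynomial.aeval u φ) {n : ℕ}
    (hn : 0 < n) : (n : R) * coeff (d * n) u = (φ ^ n).coeff (n - 1) := by
  set Φ := universalPolynomial φ.natDegree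
  set g := MvPolynomial.eval₂Hom (Int.castRingHom R) fun i => φ.coeff (i + 1)
  obtain ⟨U, hU⟩ := (isXAdicContraction_X_pow_mul_aeval hd Φ).exists_isFixedPt
  have hgU : map g U = u := by
    refine (isXAdicContraction_X_pow_mul_aeval hd φ).eq_of_isFixedPt ?_ hu.symm
    calc X ^ d * Polynomial.aeval (map g U) φ = map g (X ^ d * Polynomial.aeval U Φ) := by
          rw [map_mul, map_pow, map_X,
            Polynomial.map_aeval_eq_aeval_map (φ := g) (RingHom.ext fun _ => by simp),
            map_universalPolynomial hφ]
      _ = map g U := congrArg _ hU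
  have hΦ : Φ.coeff 0 = 1 := by simp [Φ, universalPolynomial]
  have := congrArg g (lagrange_inversion_of_isAddTorsionFree hd (hΦ ▸ isUnit_one) hU.symm hn)
  rwa [map_mul, map_natCast, ← coeff_map, hgU, ← Polynomial.coeff_map, Polynomial.map_pow,
    map_universalPolynomial hφ] at this

theorem Polynomial.coeff_sum_C_mul_X_pow_pow {R ι : Type*} [CommSemiring R] [Fintype ι]
    [DecidableEq ι] (a : ι → R) (e : ι → ℕ) (n m : ℕ) :
    ((∑ i, C (a i) * X ^ e i) ^ n).coeff m
      = ∑ k ∈ (piAntidiag univ n).filter (fun k => ∑ i, k i * e i = m),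
          (Nat.multinomial univ k : R) * ∏ i, a i ^ k i := by
  rw [sum_pow_eq_sum_piAntidiag, finsetSum_coeff, sum_filter]
  refine sum_congr rfl fun k _ => ?_
  simp only [mul_pow, prod_mul_distrib, ← map_pow, ← map_prod, ← pow_mul, prod_pow_eq_pow_sum,
    ← C_eq_natCast, mul_comm (e _)]
  rw [← mul_assoc, ← map_mul, coeff_C_mul_X_pow]
  simp only [eq_comm]

section ReversedQuintic

variable {R : Type*} [CommRing R]

/-- `1 + b₁x + ⋯ + b₅x⁵ = x⁵ f(1/x)` for the quintic `f` of the curve `y² = f(x)`. -/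
noncomputable def reversedQuintic (b1 b2 b3 b4 b5 : R) : R[X] :=
  ∑ i : Fin 6, Polynomial.C (![1, b1, b2, b3, b4, b5] i) * Polynomial.X ^ (i : ℕ)

theorem aeval_reversedQuintic (b1 b2 b3 b4 b5 : R) (u : R⟦X⟧) :
    Polynomial.aeval u (reversedQuintic b1 b2 b3 b4 b5)
      = 1 + C b1 * u + C b2 * u ^ 2 + C b3 * u ^ 3 + C b4 * u ^ 4 + C b5 * u ^ 5 := by
  simp [reversedQuintic, Fin.sum_univ_succ, add_assoc]

theorem coeff_zero_reversedQuintic (b1 b2 b3 b4 b5 : R) :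
    (reversedQuintic b1 b2 b3 b4 b5).coeff 0 = 1 := by
  simp [reversedQuintic, Fin.sum_univ_succ, Polynomial.coeff_X_pow]

theorem fin_cons_eq_vecCons {α : Type*} (c : α) (k : Fin 5 → α) :
    (Fin.cons c k : Fin 6 → α) = ![c, k 0, k 1, k 2, k 3, k 4] := by
  ext i
  fin_cases i <;> rfl

theorem coeff_reversedQuintic_pow (b1 b2 b3 b4 b5 : R) {n : ℕ} (hn : 0 < n) :
    ((reversedQuintic b1 b2 b3 b4 b5) ^ n).coeff (n - 1)
      = ∑ k ∈ (Fintype.piFinset fun _ : Fin 5 => Finset.range n) |>.filter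
            (fun k => k 0 + 2 * k 1 + 3 * k 2 + 4 * k 3 + 5 * k 4 = n - 1),
          (lagrangeMultinomial k : R) *
            (b1 ^ k 0 * b2 ^ k 1 * b3 ^ k 2 * b4 ^ k 3 * b5 ^ k 4) := by
  rw [reversedQuintic, Polynomial.coeff_sum_C_mul_X_pow_pow]
  symm
  have hS6 : ∀ k : Fin 6 → ℕ,
      k ∈ (piAntidiag univ n).filter (fun k => ∑ i : Fin 6, k i * (i : ℕ) = n - 1) ↔
        k 0 + k 1 + k 2 + k 3 + k 4 + k 5 = n ∧
          k 1 + 2 * k 2 + 3 * k 3 + 4 * k 4 + 5 * k 5 = n - 1 := by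
    intro k
    simp [mem_piAntidiag, Fin.sum_univ_six, mul_comm]
  refine sum_nbij' (fun k => Fin.cons (k 1 + 2 * k 2 + 3 * k 3 + 4 * k 4 + 1) k) Fin.tail
    ?_ ?_ ?_ ?_ ?_
  · intro k hk
    simp only [mem_filter, Fintype.mem_piFinset, mem_range] at hk
    rw [hS6, fin_cons_eq_vecCons]
    simp only [Matrix.cons_val]
    omega
  · intro k hk
    rw [hS6] at hk
    simp only [mem_filter, Fintype.mem_piFinset, mem_range, Fin.forall_fin_succ, Fin.tail,
      Fin.succ_zero_eq_one, Fin.succ_one_eq_two, Fin.reduceSucc, IsEmpty.forall_iff, and_true]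
    omega
  · intro k _
    exact Fin.tail_cons _ _
  · intro k hk
    rw [hS6] at hk
    conv_rhs => rw [← Fin.cons_self_tail k]
    congr 1
    show k 2 + 2 * k 3 + 3 * k 4 + 4 * k 5 + 1 = k 0
    omega
  · intro k _
    rw [lagrangeMultinomial, Fin.prod_univ_six]
    simp only [fin_cons_eq_vecCons, Matrix.cons_val]
    ring

end ReversedQuintic

theorem stmt10 {R : Type*} [CommRing R] (b1 b2 b3 b4 b5 : R) (u : PowerSeries R)
    (hu : SatisfiesCurveEqAtInfinity b1 b2 b3 b4 b5 u) :
    ∀ n : ℕ, 1 ≤ n →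
      (n : R) * coeff (2 * n) u =
        ∑ k ∈ (Fintype.piFinset fun _ : Fin 5 => Finset.range n) |>.filter
            (fun k => k 0 + 2 * k 1 + 3 * k 2 + 4 * k 3 + 5 * k 4 = n - 1),
          (lagrangeMultinomial k : R) *
            (b1 ^ k 0 * b2 ^ k 1 * b3 ^ k 2 * b4 ^ k 3 * b5 ^ k 4) := by
  intro n hn
  have hu' : u = X ^ 2 * Polynomial.aeval u (reversedQuintic b1 b2 b3 b4 b5) := by
    rw [aeval_reversedQuintic]
    exact hu
  rw [lagrange_inversion two_pos (coeff_zero_reversedQuintic b1 b2 b3 b4 b5) hu' hn,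
    coeff_reversedQuintic_pow b1 b2 b3 b4 b5 hn]
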